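/- arXiv:2601.16317 — 3 statements merged into one kernel-verified Lean document; each statement's English description precedes it below -/
import Mathlib

section
/- Let ε > 0, z = e^ε + e^{−ε}, and d ≥ 2. Let T be the ideal TSAC transition matrix (T_{11}=T_{12}=e^ε/z; T_{k,k+1}=e^ε/z and T_{k+1,k}=e^{−ε}/z for 1 ≤ k ≤ d−1 except as modified at the corners; T_{d,d−1}=T_{d,d}=e^{−ε}/z; all other entries zero). Then the vector v with v_k = z₂ e^{−2ε(k−1)}, z₂ = (1−e^{−2ε})/(1−e^{−2dε}), satisfies T v = v. -/
/-!
The matrix carries `a = e^ε/z` on its superdiagonal and top corner and `b = e^{-ε}/z = a r`,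
with `r = e^{-2ε}`, on its subdiagonal and bottom corner; moreover `a + b = 1`. A geometric
vector `c r^k` is then fixed row by row: an interior row reads `b + a r² = r`, the top row
`a (1 + r) = 1` and the bottom row `b (1 + r) = r`, all three consequences of `a + b = 1` and
`b = a r`.
-/

section

open Matrix

variable {R : Type*} [CommRing R]

def reflectingWalk (d : ℕ) (a b : R) : Matrix (Fin d) (Fin d) R :=
  Matrix.of fun (i j : Fin d) =>
    if (i : ℕ) + 1 = (j : ℕ) ∨ ((i : ℕ) = 0 ∧ (j : ℕ) = 0) then a
    else if (j : ℕ) + 1 = (i : ℕ) ∨ ((i : ℕ) = d - 1 ∧ (j : ℕ) = d - 1) then b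
    else 0

variable {d : ℕ} (a b : R) (v : Fin d → R)

theorem reflectingWalk_mulVec_zero (hd : 1 < d) :
    (reflectingWalk d a b *ᵥ v) ⟨0, by omega⟩ = a * v ⟨0, by omega⟩ + a * v ⟨1, hd⟩ := by
  rw [mulVec, dotProduct, Fintype.sum_eq_add ⟨0, by omega⟩ ⟨1, hd⟩ (by simp [Fin.ext_iff])]
  · simp (disch := omega) only [reflectingWalk, of_apply, if_neg, and_self, or_true, true_or,
      ite_true]
  · rintro j ⟨hj₀, hj₁⟩
    simp only [Fin.ne_iff_vne] at hj₀ hj₁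
    simp (disch := omega) only [reflectingWalk, of_apply, if_neg, zero_mul]

theorem reflectingWalk_mulVec_last (i : ℕ) (hi : i + 2 = d) :
    (reflectingWalk d a b *ᵥ v) ⟨i + 1, by omega⟩ =
      b * v ⟨i, by omega⟩ + b * v ⟨i + 1, by omega⟩ := by
  rw [mulVec, dotProduct,
    Fintype.sum_eq_add ⟨i, by omega⟩ ⟨i + 1, by omega⟩ (by simp [Fin.ext_iff])]
  · simp (disch := omega) only [reflectingWalk, of_apply, if_pos, if_neg, and_self, true_or,
      ite_true]
  · rintro j ⟨hj₀, hj₁⟩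
    simp only [Fin.ne_iff_vne] at hj₀ hj₁
    simp (disch := omega) only [reflectingWalk, of_apply, if_neg, zero_mul]

theorem reflectingWalk_mulVec_interior (i : ℕ) (hi : i + 2 < d) :
    (reflectingWalk d a b *ᵥ v) ⟨i + 1, by omega⟩ =
      b * v ⟨i, by omega⟩ + a * v ⟨i + 2, hi⟩ := by
  rw [mulVec, dotProduct, Fintype.sum_eq_add ⟨i, by omega⟩ ⟨i + 2, hi⟩ (by simp [Fin.ext_iff])]
  · simp (disch := omega) only [reflectingWalk, of_apply, if_neg, true_or, ite_true]
  · rintro j ⟨hj₀, hj₁⟩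
    simp only [Fin.ne_iff_vne] at hj₀ hj₁
    simp (disch := omega) only [reflectingWalk, of_apply, if_neg, zero_mul]

theorem reflectingWalk_mulVec_geometric (hd : 2 ≤ d) {r : R} (hab : a + b = 1)
    (hba : b = a * r) (c : R) :
    reflectingWalk d a b *ᵥ (fun i : Fin d => c * r ^ (i : ℕ)) =
      fun i : Fin d => c * r ^ (i : ℕ) := by
  ext ⟨_ | i, hi⟩
  · rw [reflectingWalk_mulVec_zero a b _ hd]
    linear_combination c * hab - c * hba
  · by_cases hlast : i + 2 = d
    · rw [reflectingWalk_mulVec_last a b _ i hlast]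
      linear_combination c * r ^ i * (hba + r * hab)
    · rw [reflectingWalk_mulVec_interior a b _ i (by omega)]
      linear_combination c * r ^ i * ((1 - r) * hba + r * hab)

end

theorem ideal_cooling_limit_is_stationary_general (d : ℕ) (hd : 2 ≤ d) (ε : ℝ)
    (z : ℝ) (hz : z = Real.exp ε + Real.exp (-ε))
    (T : Matrix (Fin d) (Fin d) ℝ)
    (hT : T = Matrix.of fun (i j : Fin d) =>
      if (i : ℕ) + 1 = (j : ℕ) ∨ ((i : ℕ) = 0 ∧ (j : ℕ) = 0) then Real.exp ε / z
      else if (j : ℕ) + 1 = (i : ℕ) ∨ ((i : ℕ) = d - 1 ∧ (j : ℕ) = d - 1)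
        then Real.exp (-ε) / z
      else 0)
    (z₂ : ℝ)
    (v : Fin d → ℝ) (hv : ∀ i : Fin d, v i = z₂ * Real.exp (-2 * ε * (i : ℕ))) :
    T.mulVec v = v := by
  have hz₀ : z ≠ 0 := hz ▸ by positivity
  have hv_geom : v = fun i : Fin d => z₂ * Real.exp (-2 * ε) ^ (i : ℕ) := by
    ext i
    rw [hv, ← Real.exp_nat_mul, mul_comm (i : ℝ)]
  subst hT hv_geom
  apply reflectingWalk_mulVec_geometric _ _ hd
  · rw [← add_div, ← hz, div_self hz₀]
  · rw [div_mul_eq_mul_div, ← Real.exp_add]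
    ring_nf

/-- The truncated thermal distribution `v_k = z₂ e^{-2ε(k-1)}` is a fixed point of the
ideal TSAC transition matrix. -/
theorem ideal_cooling_limit_is_stationary (d : ℕ) (hd : 2 ≤ d) (ε : ℝ) (hε : 0 < ε)
    (z : ℝ) (hz : z = Real.exp ε + Real.exp (-ε))
    (T : Matrix (Fin d) (Fin d) ℝ)
    (hT : T = Matrix.of fun (i j : Fin d) =>
      if (i : ℕ) + 1 = (j : ℕ) ∨ ((i : ℕ) = 0 ∧ (j : ℕ) = 0) then Real.exp ε / z
      else if (j : ℕ) + 1 = (i : ℕ) ∨ ((i : ℕ) = d - 1 ∧ (j : ℕ) = d - 1)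
        then Real.exp (-ε) / z
      else 0)
    (z₂ : ℝ) (hz₂ : z₂ = (1 - Real.exp (-2 * ε)) / (1 - Real.exp (-2 * (d : ℝ) * ε)))
    (v : Fin d → ℝ) (hv : ∀ i : Fin d, v i = z₂ * Real.exp (-2 * ε * (i : ℕ))) :
    T.mulVec v = v :=
  ideal_cooling_limit_is_stationary_general d hd ε z hz T hT z₂ v hv
end

section
/- Let ε > 0 and E = tanh ε. Consider the root λ₁(η) = [2 + dC + √((2+dC)² − 4(1−E²))]/(2(1+E)) with dC = 2η/(1−η), viewed as a function of η ∈ [0,1). Then λ₁(0) = 1 and the derivative of λ₁ at η = 0 equals 1/E = 1/tanh ε. -/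
/-!
`λ₁` is the larger root of `(1 + E) λ² - s λ + (1 - E) = 0` with `s(η) = 2 + 2η/(1 - η)`.
At `η = 0` we have `s = 2` and discriminant `4E²`, so `λ₁ = (2 + 2E)/(2(1 + E)) = 1`, and the
chain rule gives `λ₁'(0) = (1 + 1/E)/(2(1 + E)) · s'(0) = 1/E`.
-/

open Real

theorem Real.tanh_pos {x : ℝ} (hx : 0 < x) : 0 < tanh x := by
  rw [tanh_eq_sinh_div_cosh]
  exact div_pos (sinh_pos_iff.mpr hx) (cosh_pos x)

theorem hasDerivAt_mul_div_one_sub (c : ℝ) {x : ℝ} (hx : x ≠ 1) :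
    HasDerivAt (fun η : ℝ => c * η / (1 - η)) (c / (1 - x) ^ 2) x := by
  have hx' : 1 - x ≠ 0 := sub_ne_zero.mpr hx.symm
  refine (((hasDerivAt_id' x).const_mul c).div ((hasDerivAt_id' x).const_sub 1) hx').congr_deriv ?_
  ring

theorem hasDerivAt_add_sqrt_sq_sub_div (b c : ℝ) {s : ℝ} (hs : 0 < s ^ 2 - c) :
    HasDerivAt (fun t : ℝ => (t + √(t ^ 2 - c)) / b) ((1 + s / √(s ^ 2 - c)) / b) s := by
  have hsqrt := ((hasDerivAt_pow 2 s).sub_const c).sqrt hs.ne'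
  refine ((hasDerivAt_id' s).add (hsqrt.congr_deriv ?_)).div_const b
  have : √(s ^ 2 - c) ≠ 0 := (sqrt_pos.mpr hs).ne'
  field_simp
  norm_num

/-- Perturbative expansion of the dominant root: `λ₁(0) = 1` and `λ₁'(0) = 1/tanh ε`. -/
theorem tsac_dominant_root_perturbation (ε : ℝ) (hε : 0 < ε) (E : ℝ) (hE : E = Real.tanh ε)
    (l₁ : ℝ → ℝ)
    (hl₁ : ∀ η : ℝ, l₁ η =
      (2 + 2 * η / (1 - η) +
        Real.sqrt ((2 + 2 * η / (1 - η)) ^ 2 - 4 * (1 - E ^ 2))) / (2 * (1 + E))) :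
    l₁ 0 = 1 ∧ HasDerivAt l₁ (1 / E) 0 := by
  have hE₀ : 0 < E := hE ▸ Real.tanh_pos hε
  have hdisc : (2 : ℝ) ^ 2 - 4 * (1 - E ^ 2) = (2 * E) ^ 2 := by ring
  have hsqrt : √((2 : ℝ) ^ 2 - 4 * (1 - E ^ 2)) = 2 * E := by
    rw [hdisc, sqrt_sq (by positivity)]
  have hs : HasDerivAt (fun η : ℝ => 2 + 2 * η / (1 - η)) 2 0 := by
    simpa using (hasDerivAt_mul_div_one_sub 2 zero_ne_one).const_add 2
  have hroot := hasDerivAt_add_sqrt_sq_sub_div (2 * (1 + E)) (4 * (1 - E ^ 2))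
    (s := 2) (by rw [hdisc]; positivity)
  constructor
  · rw [hl₁ 0, mul_zero, zero_div, add_zero, hsqrt]
    field_simp
  · rw [funext hl₁]
    refine (hroot.comp_of_eq 0 hs (by norm_num)).congr_deriv ?_
    rw [hsqrt]
    field_simp
    ring
end

section
/- Let ε > 0, E = tanh ε, and for η ∈ [0,1) let λ₂(η) be the smaller root of (1+E)λ² − (2 + 2η/(1−η))λ + (1−E) = 0. Then λ₂(0) = e^{−2ε} and the derivative of λ₂ at η = 0 equals −e^{−2ε}/tanh ε, i.e., λ₂(η) = e^{−2ε}(1 − η/tanh ε) + O(η²). -/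
/-!
At `η = 0` the discriminant of `(1 + E) λ² − b λ + (1 − E)` with `b = 2` is the perfect square
`(2E)²`, so the smaller root is `(1 − E)/(1 + E)`, which equals `e^{−2ε}` for `E = tanh ε`.
The root is differentiable in `b` there with slope `(1 − 1/E)/(2(1 + E))`, and the noisy
coefficient `b(η) = 2 + 2η/(1 − η)` has slope `2` at `η = 0`; the chain rule gives
`(E − 1)/(E(1 + E)) = −e^{−2ε}/tanh ε`.
-/

open Real

/-- The smaller root of `a x² − b x + c` when `0 < a`. -/
noncomputable def quadSmallerRoot (a b c : ℝ) : ℝ :=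
  (b - √(b ^ 2 - 4 * a * c)) / (2 * a)

theorem hasDerivAt_quadSmallerRoot (a c : ℝ) {b : ℝ} (hD : 0 < b ^ 2 - 4 * a * c) :
    HasDerivAt (fun b => quadSmallerRoot a b c) ((1 - b / √(b ^ 2 - 4 * a * c)) / (2 * a)) b := by
  have hdisc : HasDerivAt (fun b => b ^ 2 - 4 * a * c) (2 * b) b := by
    simpa using (hasDerivAt_pow 2 b).sub_const (4 * a * c)
  have hsqrt := hdisc.sqrt hD.ne'
  refine (((hasDerivAt_id b).sub hsqrt).div_const (2 * a)).congr_deriv ?_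
  field_simp [(Real.sqrt_pos.2 hD).ne']

theorem sqrt_two_sq_sub_four_mul_one_add_mul_one_sub {E : ℝ} (hE : 0 ≤ E) :
    √((2 : ℝ) ^ 2 - 4 * (1 + E) * (1 - E)) = 2 * E := by
  rw [← Real.sqrt_sq (by positivity : 0 ≤ 2 * E)]
  ring_nf

theorem quadSmallerRoot_two_of_nonneg {E : ℝ} (hE : 0 ≤ E) :
    quadSmallerRoot (1 + E) 2 (1 - E) = (1 - E) / (1 + E) := by
  rw [quadSmallerRoot, sqrt_two_sq_sub_four_mul_one_add_mul_one_sub hE]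
  have : (1 : ℝ) + E ≠ 0 := by positivity
  field_simp

theorem hasDerivAt_two_add_two_mul_div_one_sub {x : ℝ} (hx : x ≠ 1) :
    HasDerivAt (fun η : ℝ => 2 + 2 * η / (1 - η)) (2 / (1 - x) ^ 2) x := by
  have hnum : HasDerivAt (fun η : ℝ => 2 * η) 2 x := by
    simpa using (hasDerivAt_id x).const_mul 2
  have hden : HasDerivAt (fun η : ℝ => 1 - η) (-1) x := by
    simpa using (hasDerivAt_id x).const_sub 1
  refine ((hnum.div hden (sub_ne_zero.2 hx.symm)).const_add 2).congr_deriv ?_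
  ring

theorem Real.exp_neg_two_mul_eq (x : ℝ) : exp (-2 * x) = (1 - tanh x) / (1 + tanh x) := by
  have hc := (cosh_pos x).ne'
  rw [tanh_eq_sinh_div_cosh, one_sub_div hc, one_add_div hc, div_div_div_cancel_right₀ hc,
    cosh_add_sinh, cosh_sub_sinh, eq_div_iff (exp_pos x).ne', ← exp_add]
  ring_nf

/-- Perturbative expansion of the decaying root: `λ₂(0) = e^{-2ε}` and
`λ₂'(0) = -e^{-2ε}/tanh ε`. -/
theorem tsac_decaying_root_perturbation (ε : ℝ) (hε : 0 < ε) (E : ℝ) (hE : E = Real.tanh ε)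
    (l₂ : ℝ → ℝ)
    (hl₂ : ∀ η : ℝ, l₂ η =
      (2 + 2 * η / (1 - η) -
        Real.sqrt ((2 + 2 * η / (1 - η)) ^ 2 - 4 * (1 - E ^ 2))) / (2 * (1 + E))) :
    l₂ 0 = Real.exp (-2 * ε) ∧
    HasDerivAt l₂ (-Real.exp (-2 * ε) / Real.tanh ε) 0 := by
  have hE0 : 0 < E := hE ▸ tanh_pos hε
  have hl₂_comp : l₂ = (fun b => quadSmallerRoot (1 + E) b (1 - E)) ∘
      (fun η : ℝ => 2 + 2 * η / (1 - η)) := by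
    funext η
    rw [hl₂, Function.comp_apply, quadSmallerRoot]
    ring_nf
  have hexp : exp (-2 * ε) = (1 - E) / (1 + E) := hE ▸ exp_neg_two_mul_eq ε
  have hroot := hasDerivAt_quadSmallerRoot (1 + E) (1 - E) (b := 2) (by nlinarith)
  refine ⟨by simp [hl₂_comp, quadSmallerRoot_two_of_nonneg hE0.le, ← hexp], ?_⟩
  rw [hl₂_comp]
  refine (hroot.comp_of_eq 0 (hasDerivAt_two_add_two_mul_div_one_sub zero_ne_one) (by norm_num)).congr_deriv ?_
  rw [sqrt_two_sq_sub_four_mul_one_add_mul_one_sub hE0.le, hexp, ← hE]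
  field_simp
  ring
end
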